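/- arXiv:2001.01981 — 2 statements merged into one kernel-verified Lean document; each statement's English description precedes it below -/
import Mathlib

section
/- Suppose a ∈ {1/6, 1/4, 1/3, 1/2}. Then the Riemann hypothesis (every non-real zero of the Riemann zeta function ζ(s) has real part 1/2) holds if and only if every non-real zero of Q(s,a) lies on the critical line Re s = 1/2. -/
open Complex Real Set HurwitzZeta

/-- The quadrilateral zeta function `Q(s,a)`, defined by
`2Q(s,a) = ζ(s,a) + ζ(s,1-a) + Li_s(e^{2πia}) + Li_s(e^{2πi(1-a)})`. -/
noncomputable def Q (a : ℝ) (s : ℂ) : ℂ :=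
  (hurwitzZeta (a : UnitAddCircle) s + hurwitzZeta ((1 - a : ℝ) : UnitAddCircle) s
    + expZeta (a : UnitAddCircle) s + expZeta ((1 - a : ℝ) : UnitAddCircle) s) / 2

/-!
For `q ∈ {2, 3, 4, 6}` the only units mod `q` are `±1`, so inclusion–exclusion over the divisors
of `q` turns the distribution relations `∑_{j<d} ζ(s, j/d) = d^s ζ(s)` and
`∑_{j<d} Li_s(e^{2πij/d}) = d^{1-s} ζ(s)` into `2Q(s, 1/q) = (f(s) + f(1-s)) ζ(s)`, where `f` is a
product of factors `p^s - 1` and `p^s` (times `2` when `q = 2`). For `p > 1` and `Re s > 1/2` each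
factor is strictly smaller in modulus at `1 - s` than at `s`, so `f(s) + f(1-s)` vanishes only on
the critical line, and off it the non-real zeros of `Q(·, 1/q)` are those of `ζ`.
-/

namespace ZMod

variable {N : ℕ} [NeZero N]

lemma sum_toAddCircle_eq_sum_range (f : UnitAddCircle → ℂ) :
    ∑ j : ZMod N, f (toAddCircle j) = ∑ j ∈ Finset.range N, f ((j / N : ℝ) : UnitAddCircle) := by
  obtain ⟨n, rfl⟩ := Nat.exists_eq_succ_of_ne_zero (NeZero.ne N)
  simp only [toAddCircle_apply]
  exact Fin.sum_univ_eq_sum_range (fun j ↦ f ((j / (n + 1 : ℕ) : ℝ) : UnitAddCircle)) (n + 1)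

lemma dft_single_zero_one : 𝓕 (Pi.single 0 1 : ZMod N → ℂ) = fun _ ↦ 1 := by
  ext k
  simp [dft_apply, Pi.single_apply]

lemma dft_const_one : 𝓕 (fun _ ↦ 1 : ZMod N → ℂ) = Pi.single 0 (N : ℂ) := by
  ext k
  simp only [dft_apply, smul_eq_mul, mul_one, ← mul_neg,
    AddChar.sum_mulShift _ (isPrimitive_stdAddChar N), neg_eq_zero, Pi.single_apply, card,
    Nat.cast_ite, Nat.cast_zero]

end ZMod

section Distribution

open ZMod

variable (d : ℕ) [NeZero d] {s : ℂ}

lemma sum_range_hurwitzZeta_div (hs : s ≠ 1) :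
    ∑ j ∈ Finset.range d, hurwitzZeta ((j / d : ℝ) : UnitAddCircle) s = d ^ s * riemannZeta s := by
  have h := LFunction_dft (Pi.single 0 1 : ZMod d → ℂ) (Or.inr hs)
  rw [dft_single_zero_one, LFunction] at h
  simp only [Pi.single_apply, ite_mul, one_mul, zero_mul, Finset.sum_ite_eq', Finset.mem_univ,
    if_true, neg_zero, map_zero, expZeta_zero] at h
  have hd : (d : ℂ) ^ s ≠ 0 := by simp [cpow_eq_zero_iff, NeZero.ne d]
  rw [← sum_toAddCircle_eq_sum_range (hurwitzZeta · s), ← h, cpow_neg, ← mul_assoc,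
    mul_inv_cancel₀ hd, one_mul]

lemma sum_range_expZeta_div (hs : s ≠ 1) :
    ∑ j ∈ Finset.range d, expZeta ((j / d : ℝ) : UnitAddCircle) s =
      d ^ (1 - s) * riemannZeta s := by
  have h := LFunction_dft (fun _ ↦ 1 : ZMod d → ℂ) (Or.inr hs)
  rw [dft_const_one, LFunction] at h
  simp only [Pi.single_apply, ite_mul, zero_mul, Finset.sum_ite_eq', Finset.mem_univ, if_true,
    map_zero, hurwitzZeta_zero, one_mul] at h
  rw [← sum_toAddCircle_eq_sum_range (expZeta · s), ← Equiv.sum_comp (Equiv.neg _)]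
  simp only [Equiv.neg_apply]
  rw [← h, sub_eq_add_neg, cpow_add _ _ (Nat.cast_ne_zero.mpr (NeZero.ne _)), cpow_one]
  ring

end Distribution

section SpecialValues

variable {s : ℂ}

lemma two_mul_Q_one_half (hs : s ≠ 1) :
    2 * Q (1 / 2) s = (2 * (2 ^ s - 1) + 2 * (2 ^ (1 - s) - 1)) * riemannZeta s := by
  have H2 := sum_range_hurwitzZeta_div 2 hs
  have E2 := sum_range_expZeta_div 2 hs
  simp only [Finset.sum_range_succ, Finset.sum_range_zero] at H2 E2
  norm_num [hurwitzZeta_zero, expZeta_zero] at H2 E2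
  unfold Q
  norm_num
  linear_combination 2 * H2 + 2 * E2

lemma two_mul_Q_one_third (hs : s ≠ 1) :
    2 * Q (1 / 3) s = ((3 ^ s - 1) + (3 ^ (1 - s) - 1)) * riemannZeta s := by
  have H3 := sum_range_hurwitzZeta_div 3 hs
  have E3 := sum_range_expZeta_div 3 hs
  simp only [Finset.sum_range_succ, Finset.sum_range_zero] at H3 E3
  norm_num [hurwitzZeta_zero, expZeta_zero] at H3 E3
  unfold Q
  norm_num
  linear_combination H3 + E3

lemma two_mul_Q_one_quarter (hs : s ≠ 1) :
    2 * Q (1 / 4) s =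
      (2 ^ s * (2 ^ s - 1) + 2 ^ (1 - s) * (2 ^ (1 - s) - 1)) * riemannZeta s := by
  have H4 := sum_range_hurwitzZeta_div 4 hs
  have H2 := sum_range_hurwitzZeta_div 2 hs
  have E4 := sum_range_expZeta_div 4 hs
  have E2 := sum_range_expZeta_div 2 hs
  simp only [Finset.sum_range_succ, Finset.sum_range_zero] at H4 H2 E4 E2
  norm_num [hurwitzZeta_zero, expZeta_zero] at H4 H2 E4 E2
  have h4 (z : ℂ) : (4 : ℂ) ^ z = 2 ^ z * 2 ^ z := by
    simpa [show (2 * 2 : ℂ) = 4 by norm_num] using natCast_mul_natCast_cpow 2 2 z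
  unfold Q
  norm_num
  linear_combination H4 - H2 + E4 - E2 + riemannZeta s * (h4 s + h4 (1 - s))

lemma two_mul_Q_one_sixth (hs : s ≠ 1) :
    2 * Q (1 / 6) s =
      ((2 ^ s - 1) * (3 ^ s - 1) + (2 ^ (1 - s) - 1) * (3 ^ (1 - s) - 1)) * riemannZeta s := by
  have H6 := sum_range_hurwitzZeta_div 6 hs
  have H3 := sum_range_hurwitzZeta_div 3 hs
  have H2 := sum_range_hurwitzZeta_div 2 hs
  have E6 := sum_range_expZeta_div 6 hs
  have E3 := sum_range_expZeta_div 3 hs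
  have E2 := sum_range_expZeta_div 2 hs
  simp only [Finset.sum_range_succ, Finset.sum_range_zero] at H6 H3 H2 E6 E3 E2
  norm_num [hurwitzZeta_zero, expZeta_zero] at H6 H3 H2 E6 E3 E2
  have h6 (z : ℂ) : (6 : ℂ) ^ z = 2 ^ z * 3 ^ z := by
    simpa [show (2 * 3 : ℂ) = 6 by norm_num] using natCast_mul_natCast_cpow 2 3 z
  unfold Q
  norm_num
  linear_combination H6 - H3 - H2 + E6 - E3 - E2 + riemannZeta s * (h6 s + h6 (1 - s))

end SpecialValues

lemma norm_div_sub_one_lt_norm_sub_one {b : ℝ} (hb : 1 < b) {x : ℂ} (hx : b < ‖x‖ ^ 2) :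
    ‖b / x - 1‖ < ‖x - 1‖ := by
  have hx0 : x ≠ 0 := by rintro rfl; simp at hx; linarith
  have hxn : 0 < ‖x‖ := norm_pos_iff.mpr hx0
  rw [show (b : ℂ) / x - 1 = (b - x) / x by field_simp, norm_div, div_lt_iff₀ hxn]
  refine lt_of_pow_lt_pow_left₀ 2 (by positivity) ?_
  rw [mul_pow]
  simp only [Complex.sq_norm, normSq_apply, sub_re, sub_im, ofReal_re, ofReal_im, one_re,
    one_im] at hx ⊢
  -- `‖x‖²‖x - 1‖² - ‖b - x‖² = (‖x‖² - b) (‖x - 1‖² + b - 1)`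
  nlinarith [mul_pos (sub_pos.mpr hx) (add_pos_of_nonneg_of_pos (normSq_nonneg (x - 1))
    (sub_pos.mpr hb)), normSq_apply (x - 1)]

lemma norm_cpow_one_sub_lt {b : ℝ} (hb : 1 < b) {s : ℂ} (hs : 1 / 2 < s.re) :
    ‖(b : ℂ) ^ (1 - s)‖ < ‖(b : ℂ) ^ s‖ := by
  rw [norm_cpow_eq_rpow_re_of_pos (by linarith), norm_cpow_eq_rpow_re_of_pos (by linarith),
    Real.rpow_lt_rpow_left_iff hb, sub_re, one_re]
  linarith

lemma norm_cpow_one_sub_sub_one_lt {b : ℝ} (hb : 1 < b) {s : ℂ} (hs : 1 / 2 < s.re) :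
    ‖(b : ℂ) ^ (1 - s) - 1‖ < ‖(b : ℂ) ^ s - 1‖ := by
  have hb0 : (b : ℂ) ≠ 0 := ofReal_ne_zero.mpr (by linarith)
  rw [cpow_sub _ _ hb0, cpow_one]
  refine norm_div_sub_one_lt_norm_sub_one hb ?_
  rw [norm_cpow_eq_rpow_re_of_pos (by linarith), ← Real.rpow_natCast,
    ← Real.rpow_mul (by linarith)]
  conv_lhs => rw [← Real.rpow_one b]
  exact Real.rpow_lt_rpow_of_exponent_lt hb (by push_cast; linarith)

lemma add_apply_one_sub_ne_zero {f : ℂ → ℂ} (hf : ∀ s : ℂ, 1 / 2 < s.re → ‖f (1 - s)‖ < ‖f s‖)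
    {s : ℂ} (hs : s.re ≠ 1 / 2) : f s + f (1 - s) ≠ 0 := by
  intro h
  rcases hs.lt_or_gt with hlt | hgt
  · have := hf (1 - s) (by rw [sub_re, one_re]; linarith)
    rw [sub_sub_cancel, eq_neg_of_add_eq_zero_right h, norm_neg] at this
    exact this.false
  · have := hf s hgt
    rw [eq_neg_of_add_eq_zero_left h, norm_neg] at this
    exact this.false

lemma riemannHypothesis_iff_Q_of_two_mul_Q_eq {a : ℝ} (f : ℂ → ℂ)
    (hQ : ∀ s : ℂ, s ≠ 1 → 2 * Q a s = (f s + f (1 - s)) * riemannZeta s)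
    (hf : ∀ s : ℂ, 1 / 2 < s.re → ‖f (1 - s)‖ < ‖f s‖) :
    (∀ s : ℂ, riemannZeta s = 0 → s.im ≠ 0 → s.re = 1 / 2) ↔
      (∀ s : ℂ, Q a s = 0 → s.im ≠ 0 → s.re = 1 / 2) := by
  have hQ' {s : ℂ} (him : s.im ≠ 0) := hQ s (by rintro rfl; exact him one_im)
  refine ⟨fun hζ s hs him ↦ ?_, fun hQζ s hs him ↦ hQζ s ?_ him⟩
  · by_contra hre
    have := hQ' him
    rw [hs, mul_zero, eq_comm, mul_eq_zero] at this
    exact this.elim (add_apply_one_sub_ne_zero hf hre) (fun h ↦ hre (hζ s h him))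
  · simpa [hs] using hQ' him

/-- For `a ∈ {1/6, 1/4, 1/3, 1/2}`, the Riemann hypothesis holds if and only if every non-real
zero of `Q(s,a)` lies on the critical line `Re s = 1/2`. -/
theorem riemann_hypothesis_iff_quadrilateral_zeros_on_critical_line (a : ℝ)
    (ha : a = 1 / 6 ∨ a = 1 / 4 ∨ a = 1 / 3 ∨ a = 1 / 2) :
    (∀ s : ℂ, riemannZeta s = 0 → s.im ≠ 0 → s.re = 1 / 2) ↔
      (∀ s : ℂ, Q a s = 0 → s.im ≠ 0 → s.re = 1 / 2) := by
  have h2 {s : ℂ} (hs : 1 / 2 < s.re) := norm_cpow_one_sub_sub_one_lt (b := 2) one_lt_two hs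
  have h3 {s : ℂ} (hs : 1 / 2 < s.re) := norm_cpow_one_sub_sub_one_lt (b := 3) (by norm_num) hs
  have p2 {s : ℂ} (hs : 1 / 2 < s.re) := norm_cpow_one_sub_lt (b := 2) one_lt_two hs
  push_cast at h2 h3 p2
  rcases ha with rfl | rfl | rfl | rfl
  · refine riemannHypothesis_iff_Q_of_two_mul_Q_eq (fun z ↦ (2 ^ z - 1) * (3 ^ z - 1))
      (fun _ ↦ two_mul_Q_one_sixth) fun _ hs ↦ ?_
    simpa only [norm_mul] using mul_lt_mul'' (h2 hs) (h3 hs) (norm_nonneg _) (norm_nonneg _)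
  · refine riemannHypothesis_iff_Q_of_two_mul_Q_eq (fun z ↦ 2 ^ z * (2 ^ z - 1))
      (fun _ ↦ two_mul_Q_one_quarter) fun _ hs ↦ ?_
    simpa only [norm_mul] using mul_lt_mul'' (p2 hs) (h2 hs) (norm_nonneg _) (norm_nonneg _)
  · exact riemannHypothesis_iff_Q_of_two_mul_Q_eq (fun z ↦ 3 ^ z - 1)
      (fun _ ↦ two_mul_Q_one_third) fun _ ↦ h3
  · refine riemannHypothesis_iff_Q_of_two_mul_Q_eq (fun z ↦ 2 * (2 ^ z - 1))
      (fun _ ↦ two_mul_Q_one_half) fun _ hs ↦ ?_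
    simpa only [norm_mul, Complex.norm_two] using mul_lt_mul_of_pos_left (h2 hs) two_pos
end

section
/- For every σ ∈ (0,1) and every a ∈ (0,1/2), the partial derivative with respect to a of the quadrilateral zeta function at real argument σ is strictly negative: ∂Q(σ,a)/∂a < 0. -/
/-!
Since `Q a s = hurwitzZetaEven a s + cosZeta a s`, and the functional equation turns
`cosZeta a σ` into `k * hurwitzZetaEven a (1 - σ)` with `k > 0` for `0 < σ < 1`, it suffices that
`b ↦ hurwitzZetaEven b τ` is decreasing at `a` for real `τ > 0`, `τ ≠ 1`. On `0 < re s` the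
first-order Euler–Maclaurin formula continues `hurwitzZeta b s` by a series that can be
differentiated termwise in `b`, which gives `∂_b ζ(s, b) = -s ζ(s + 1, b)`. Hence
`∂_a hurwitzZetaEven a τ = -τ (ζ(τ + 1, a) - ζ(τ + 1, 1 - a)) / 2`, which is negative for
`a < 1/2` because the real series `ζ(τ + 1, ·)` is strictly decreasing.
-/

open Complex Real Set HurwitzZeta

open Filter Topology

noncomputable section

lemma hasSum_sub_succ {G : Type*} [AddCommGroup G] [TopologicalSpace G] [IsTopologicalAddGroup G]
    [T2Space G] {f : ℕ → G} (hs : Summable fun n => f n - f (n + 1))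
    (hf : Tendsto f atTop (𝓝 0)) : HasSum (fun n => f n - f (n + 1)) (f 0) := by
  refine hs.hasSum_iff_tendsto_nat.mpr ?_
  simp_rw [Finset.sum_range_sub']
  simpa using tendsto_const_nhds.sub hf

lemma summable_rpow_natCast_add {x r : ℝ} (hx : 0 < x) (hr : 1 < r) :
    Summable fun n : ℕ => ((n : ℝ) + x) ^ (-r) := by
  refine ((summable_one_div_nat_add_rpow x r).mpr hr).congr fun n => ?_
  rw [abs_of_pos (by positivity), rpow_neg (by positivity), one_div]

lemma tsum_rpow_natCast_add_lt {x y r : ℝ} (hx : 0 < x) (hxy : x < y) (hr : 1 < r) :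
    ∑' n : ℕ, ((n : ℝ) + y) ^ (-r) < ∑' n : ℕ, ((n : ℝ) + x) ^ (-r) := by
  refine Summable.tsum_lt_tsum_of_nonneg (i := 0)
    (fun n => rpow_nonneg (by linarith [n.cast_nonneg (α := ℝ)]) _)
    (fun n => rpow_le_rpow_of_nonpos (by positivity) (by linarith) (by linarith)) ?_
    (summable_rpow_natCast_add hx hr)
  simpa using rpow_lt_rpow_of_neg hx hxy (by linarith)

lemma hasDerivAt_ofReal_cpow_of_pos {x : ℝ} (hx : 0 < x) (w : ℂ) :
    HasDerivAt (fun y : ℝ => (y : ℂ) ^ w) (w * (x : ℂ) ^ (w - 1)) x := by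
  simpa using ((hasDerivAt_id (x : ℂ)).cpow_const (ofReal_mem_slitPlane.mpr hx)).comp_ofReal

lemma hasDerivAt_ofReal_add_cpow {x c : ℝ} (hx : 0 < x + c) (w : ℂ) :
    HasDerivAt (fun y : ℝ => ((y + c : ℝ) : ℂ) ^ w) (w * ((x + c : ℝ) : ℂ) ^ (w - 1)) x :=
  (hasDerivAt_ofReal_cpow_of_pos hx w).comp_add_const x c

lemma norm_ofReal_cpow_sub_le {x t : ℝ} (hx : 0 < x) (ht : t ∈ Icc (0 : ℝ) 1) {s : ℂ}
    (hs : -1 ≤ s.re) :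
    ‖(x : ℂ) ^ (-s) - ((x + t : ℝ) : ℂ) ^ (-s)‖ ≤ ‖s‖ * x ^ (-s.re - 1) := by
  have hderiv : ∀ v ∈ Icc (0 : ℝ) 1, HasDerivWithinAt (fun v : ℝ => ((v + x : ℝ) : ℂ) ^ (-s))
      (-s * ((v + x : ℝ) : ℂ) ^ (-s - 1)) (Icc 0 1) v := fun v hv =>
    (hasDerivAt_ofReal_add_cpow (by linarith [hv.1]) _).hasDerivWithinAt
  have hbound : ∀ v ∈ Icc (0 : ℝ) 1,
      ‖-s * ((v + x : ℝ) : ℂ) ^ (-s - 1)‖ ≤ ‖s‖ * x ^ (-s.re - 1) := by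
    intro v hv
    rw [norm_mul, norm_neg, norm_cpow_eq_rpow_re_of_pos (by linarith [hv.1])]
    simp only [sub_re, neg_re, one_re]
    exact mul_le_mul_of_nonneg_left
      (rpow_le_rpow_of_nonpos hx (by linarith [hv.1]) (by linarith)) (norm_nonneg s)
  have := (convex_Icc (0 : ℝ) 1).norm_image_sub_le_of_norm_hasDerivWithin_le hderiv hbound
    (left_mem_Icc.mpr zero_le_one) ht
  rw [norm_sub_rev, add_comm x t]
  simpa [abs_of_nonneg ht.1, ht.2] using this.trans
    (mul_le_of_le_one_right (by positivity) (by simpa [abs_of_nonneg ht.1] using ht.2))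

/-- `x ^ (-s) - ∫ y in x..x+1, y ^ (-s)`: the error of the first-order Euler–Maclaurin
approximation of the term `x ^ (-s)`. -/
def eulerMaclaurinTerm (s : ℂ) (x : ℝ) : ℂ :=
  (x : ℂ) ^ (-s) + (((x + 1 : ℝ) : ℂ) ^ (1 - s) - (x : ℂ) ^ (1 - s)) / (s - 1)

lemma norm_eulerMaclaurinTerm_le {s : ℂ} (hs : -1 ≤ s.re) (hs1 : s ≠ 1) {x : ℝ} (hx : 0 < x) :
    ‖eulerMaclaurinTerm s x‖ ≤ ‖s‖ * x ^ (-s.re - 1) := by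
  have hs1' : s - 1 ≠ 0 := sub_ne_zero.mpr hs1
  let h : ℝ → ℂ := fun t =>
    t * (x : ℂ) ^ (-s) + (((t + x : ℝ) : ℂ) ^ (1 - s) - (x : ℂ) ^ (1 - s)) / (s - 1)
  have hderiv : ∀ t ∈ Icc (0 : ℝ) 1,
      HasDerivWithinAt h ((x : ℂ) ^ (-s) - ((x + t : ℝ) : ℂ) ^ (-s)) (Icc 0 1) t := by
    intro t ht
    have := ((hasDerivAt_id t).ofReal_comp.mul_const ((x : ℂ) ^ (-s))).add
      (((hasDerivAt_ofReal_add_cpow (c := x) (by linarith [ht.1]) (1 - s)).sub_const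
        ((x : ℂ) ^ (1 - s))).div_const (s - 1))
    refine this.hasDerivWithinAt.congr_deriv ?_
    rw [add_comm x t, sub_sub_cancel_left, ofReal_one]
    field_simp
    ring
  have := (convex_Icc (0 : ℝ) 1).norm_image_sub_le_of_norm_hasDerivWithin_le hderiv
    (fun t ht => norm_ofReal_cpow_sub_le hx ht hs) (left_mem_Icc.mpr zero_le_one)
    (right_mem_Icc.mpr zero_le_one)
  simpa [h, eulerMaclaurinTerm, add_comm] using this

def eulerMaclaurinTermDeriv (s : ℂ) (x : ℝ) : ℂ :=
  -s * (x : ℂ) ^ (-s - 1) + ((x : ℂ) ^ (-s) - ((x + 1 : ℝ) : ℂ) ^ (-s))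

lemma hasDerivAt_eulerMaclaurinTerm {s : ℂ} (hs1 : s ≠ 1) {x : ℝ} (hx : 0 < x) :
    HasDerivAt (eulerMaclaurinTerm s) (eulerMaclaurinTermDeriv s x) x := by
  have hs1' : s - 1 ≠ 0 := sub_ne_zero.mpr hs1
  have := (hasDerivAt_ofReal_cpow_of_pos hx (-s)).add
    (((hasDerivAt_ofReal_add_cpow (by linarith : 0 < x + 1) (1 - s)).sub
      (hasDerivAt_ofReal_cpow_of_pos hx (1 - s))).div_const (s - 1))
  refine this.congr_deriv ?_
  rw [eulerMaclaurinTermDeriv, sub_sub_cancel_left]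
  field_simp
  ring

lemma norm_eulerMaclaurinTermDeriv_le {s : ℂ} (hs : -1 ≤ s.re) {x : ℝ} (hx : 0 < x) :
    ‖eulerMaclaurinTermDeriv s x‖ ≤ 2 * ‖s‖ * x ^ (-s.re - 1) := by
  have hpow : ‖-s * (x : ℂ) ^ (-s - 1)‖ = ‖s‖ * x ^ (-s.re - 1) := by
    rw [norm_mul, norm_neg, norm_cpow_eq_rpow_re_of_pos hx]
    simp
  have hsub := norm_ofReal_cpow_sub_le hx (right_mem_Icc.mpr zero_le_one) hs
  rw [eulerMaclaurinTermDeriv]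
  linarith [norm_add_le (-s * (x : ℂ) ^ (-s - 1)) ((x : ℂ) ^ (-s) - ((x + 1 : ℝ) : ℂ) ^ (-s))]

lemma differentiableAt_eulerMaclaurinTerm {s : ℂ} (hs1 : s ≠ 1) {x : ℝ} (hx : 0 < x) :
    DifferentiableAt ℂ (fun s => eulerMaclaurinTerm s x) s := by
  have hx0 : (x : ℂ) ≠ 0 := ofReal_ne_zero.mpr hx.ne'
  have hx1 : ((x + 1 : ℝ) : ℂ) ≠ 0 := ofReal_ne_zero.mpr (by linarith)
  unfold eulerMaclaurinTerm
  fun_prop (disch := first | exact Or.inl hx0 | exact Or.inl hx1 | exact sub_ne_zero.mpr hs1)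

lemma tendsto_ofReal_natCast_add_cpow_neg {x : ℝ} (hx : 0 < x) {s : ℂ} (hs : 0 < s.re) :
    Tendsto (fun n : ℕ => (((n : ℝ) + x : ℝ) : ℂ) ^ (-s)) atTop (𝓝 0) := by
  rw [tendsto_zero_iff_norm_tendsto_zero]
  refine ((tendsto_rpow_neg_atTop hs).comp
    (tendsto_atTop_add_const_right atTop x tendsto_natCast_atTop_atTop)).congr fun n => ?_
  rw [norm_cpow_eq_rpow_re_of_pos (by positivity), neg_re, Function.comp_apply]

lemma summable_norm_ofReal_natCast_add_cpow_neg {x : ℝ} (hx : 0 < x) {s : ℂ} (hs : 1 < s.re) :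
    Summable fun n : ℕ => ‖(((n : ℝ) + x : ℝ) : ℂ) ^ (-s)‖ :=
  (summable_rpow_natCast_add hx hs).congr fun n => by
    rw [norm_cpow_eq_rpow_re_of_pos (by positivity), neg_re]

lemma summable_eulerMaclaurinTerm {b : ℝ} (hb : 0 < b) {s : ℂ} (hs : 0 < s.re) (hs1 : s ≠ 1) :
    Summable fun n : ℕ => eulerMaclaurinTerm s (n + b) := by
  refine .of_norm_bounded
    ((summable_rpow_natCast_add hb (r := s.re + 1) (by linarith)).mul_left ‖s‖) fun n => ?_
  rw [neg_add']
  exact norm_eulerMaclaurinTerm_le (by linarith) hs1 (by positivity)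

lemma hasSum_eulerMaclaurinTermDeriv {x : ℝ} (hx : 0 < x) {s : ℂ} (hs : 0 < s.re) :
    HasSum (fun n : ℕ => eulerMaclaurinTermDeriv s (n + x))
      (-s * ∑' n : ℕ, (((n : ℝ) + x : ℝ) : ℂ) ^ (-s - 1) + (x : ℂ) ^ (-s)) := by
  let f : ℕ → ℂ := fun n => (((n : ℝ) + x : ℝ) : ℂ) ^ (-s)
  have hstep : ∀ n : ℕ, f (n + 1) = (((n + x) + 1 : ℝ) : ℂ) ^ (-s) := fun n => by
    simp only [f]; push_cast; ring_nf
  have hpow : Summable fun n : ℕ => (((n : ℝ) + x : ℝ) : ℂ) ^ (-s - 1) :=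
    .of_norm (summable_norm_ofReal_natCast_add_cpow_neg hx (s := s + 1) (by simp; linarith)
      |>.congr fun n => by rw [neg_add'])
  have htele : Summable fun n => f n - f (n + 1) :=
    .of_norm_bounded ((summable_rpow_natCast_add hx (r := s.re + 1) (by linarith)).mul_left ‖s‖)
      fun n => by
        rw [hstep, neg_add']
        exact norm_ofReal_cpow_sub_le (by positivity) (right_mem_Icc.mpr zero_le_one) (by linarith)
  have := (hpow.hasSum.mul_left (-s)).add
    (hasSum_sub_succ htele (tendsto_ofReal_natCast_add_cpow_neg hx hs))
  simpa only [eulerMaclaurinTermDeriv, hstep, f, Nat.cast_zero, zero_add] using this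

def hurwitzZetaEulerMaclaurin (b : ℝ) (s : ℂ) : ℂ :=
  (b : ℂ) ^ (1 - s) / (s - 1) + ∑' n : ℕ, eulerMaclaurinTerm s (n + b)

lemma hurwitzZeta_eq_hurwitzZetaEulerMaclaurin_of_one_lt_re {b : ℝ} (hb : b ∈ Ioc 0 1) {s : ℂ}
    (hs : 1 < s.re) : hurwitzZeta b s = hurwitzZetaEulerMaclaurin b s := by
  have hs1 : s ≠ 1 := by rintro rfl; simp at hs
  let f : ℕ → ℂ := fun n => (((n : ℝ) + b : ℝ) : ℂ) ^ (1 - s) / (s - 1)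
  have hZ : HasSum (fun n : ℕ => (((n : ℝ) + b : ℝ) : ℂ) ^ (-s)) (hurwitzZeta b s) :=
    (hasSum_hurwitzZeta_of_one_lt_re (Ioc_subset_Icc_self hb) hs).congr_fun fun n => by
      rw [cpow_neg, one_div]; push_cast; rfl
  have hE := summable_eulerMaclaurinTerm hb.1 (by linarith) hs1
  have hterm : ∀ n : ℕ,
      f n - f (n + 1) = (((n : ℝ) + b : ℝ) : ℂ) ^ (-s) - eulerMaclaurinTerm s (n + b) := by
    intro n
    simp only [f, eulerMaclaurinTerm]
    push_cast
    ring_nf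
  have hf : Tendsto f atTop (𝓝 0) := by
    simpa [f, neg_sub] using
      (tendsto_ofReal_natCast_add_cpow_neg hb.1 (s := s - 1) (by simp; linarith)).div_const (s - 1)
  have hT := hasSum_sub_succ ((hZ.summable.sub hE).congr fun n => (hterm n).symm) hf
  have : HasSum (fun n : ℕ => eulerMaclaurinTerm s (n + b)) (hurwitzZeta b s - f 0) :=
    (hZ.sub hT).congr_fun fun n => by rw [hterm]; ring
  rw [hurwitzZetaEulerMaclaurin, this.tsum_eq]
  simp [f]

lemma differentiableAt_hurwitzZetaEulerMaclaurin {b : ℝ} (hb : 0 < b) {s : ℂ} (hs : 0 < s.re)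
    (hs1 : s ≠ 1) : DifferentiableAt ℂ (hurwitzZetaEulerMaclaurin b) s := by
  set δ := s.re / 2 with hδ
  have hδ0 : 0 < δ := by positivity
  set M := ‖s‖ + 1
  let V : Set ℂ := {z | δ < z.re ∧ ‖z‖ < M} \ {1}
  have hV : IsOpen V := ((isOpen_lt continuous_const continuous_re).inter
    (isOpen_lt continuous_norm continuous_const)).sdiff isClosed_singleton
  have hsV : s ∈ V := ⟨⟨by linarith, by linarith⟩, hs1⟩
  -- `n = 0` is excluded: for `b < 1`, `b ^ (-z.re - 1)` is not bounded by `b ^ (-δ - 1)` on `V`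
  have hbound : ∀ᶠ n : ℕ in cofinite, ∀ z ∈ V,
      ‖eulerMaclaurinTerm z (n + b)‖ ≤ M * ((n : ℝ) + b) ^ (-(δ + 1)) := by
    rw [Nat.cofinite_eq_atTop]
    filter_upwards [eventually_ge_atTop 1] with n hn z hz
    have hn' : (1 : ℝ) ≤ n + b := by linarith [(Nat.one_le_cast (α := ℝ)).mpr hn]
    refine (norm_eulerMaclaurinTerm_le (by linarith [hz.1.1]) hz.2 (by positivity)).trans ?_
    exact mul_le_mul hz.1.2.le (rpow_le_rpow_of_exponent_le hn' (by linarith [hz.1.1]))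
      (by positivity) (by positivity)
  have htsum : DifferentiableOn ℂ (fun z => ∑' n : ℕ, eulerMaclaurinTerm z (n + b)) V := by
    refine (tendstoUniformlyOn_tsum_of_cofinite_eventually
      ((summable_rpow_natCast_add hb (by linarith)).mul_left M) hbound).tendstoLocallyUniformlyOn
      |>.differentiableOn (.of_forall fun t => DifferentiableOn.fun_sum fun n _ z hz => ?_) hV
    exact (differentiableAt_eulerMaclaurinTerm hz.2 (by positivity)).differentiableWithinAt
  have hb0 : (b : ℂ) ≠ 0 := ofReal_ne_zero.mpr hb.ne'
  have hpole : DifferentiableAt ℂ (fun z : ℂ => (b : ℂ) ^ (1 - z) / (z - 1)) s := by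
    fun_prop (disch := first | exact Or.inl hb0 | exact sub_ne_zero.mpr hs1)
  exact hpole.add (htsum.differentiableAt (hV.mem_nhds hsV))

lemma isPreconnected_re_pos_diff_one : IsPreconnected ({s : ℂ | 0 < s.re} \ {1}) := by
  let S : Set ℂ := {z | 0 < z.re} ∩ {z | z.re < 1}
  let U : Set ℂ := {z | 0 < z.re} ∩ {z | 0 < z.im}
  let L : Set ℂ := {z | 0 < z.re} ∩ {z | z.im < 0}
  let R : Set ℂ := {z | 1 < z.re}
  have hSU : IsPreconnected (S ∪ U) :=
    .union' ⟨1 / 2 + I, by norm_num [S, U]⟩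
      ((convex_halfSpace_re_gt 0).inter (convex_halfSpace_re_lt 1)).isPreconnected
      ((convex_halfSpace_re_gt 0).inter (convex_halfSpace_im_gt 0)).isPreconnected
  have hSUL : IsPreconnected (S ∪ U ∪ L) :=
    .union' ⟨1 / 2 - I, by norm_num [S, L]⟩ hSU
      ((convex_halfSpace_re_gt 0).inter (convex_halfSpace_im_lt 0)).isPreconnected
  have hSULR : IsPreconnected (S ∪ U ∪ L ∪ R) :=
    .union' ⟨2 + I, by norm_num [U, R]⟩ hSUL (convex_halfSpace_re_gt 1).isPreconnected
  convert hSULR using 1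
  ext z
  simp only [S, U, L, R, Set.mem_sdiff, mem_union, mem_inter_iff, mem_ofPred_eq, mem_singleton_iff]
  constructor
  · rintro ⟨h0, h1⟩
    rcases lt_trichotomy z.re 1 with h | h | h
    · tauto
    · have him : z.im ≠ 0 := fun him => h1 (Complex.ext (by simp [h]) (by simp [him]))
      rcases him.lt_or_gt with h' | h' <;> tauto
    · tauto
  · rintro (((⟨h0, h1⟩ | ⟨h0, h1⟩) | ⟨h0, h1⟩) | h) <;> refine ⟨by linarith, ?_⟩ <;> rintro rfl <;>
      norm_num at *

lemma hurwitzZeta_eq_hurwitzZetaEulerMaclaurin {b : ℝ} (hb : b ∈ Ioc 0 1) {s : ℂ} (hs : 0 < s.re)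
    (hs1 : s ≠ 1) : hurwitzZeta b s = hurwitzZetaEulerMaclaurin b s := by
  have hopen : IsOpen ({s : ℂ | 0 < s.re} \ {1}) :=
    (isOpen_lt continuous_const continuous_re).sdiff isClosed_singleton
  have hζ : AnalyticOnNhd ℂ (hurwitzZeta b) ({s : ℂ | 0 < s.re} \ {1}) :=
    DifferentiableOn.analyticOnNhd
      (fun z hz => (differentiableAt_hurwitzZeta _ hz.2).differentiableWithinAt) hopen
  have hEM : AnalyticOnNhd ℂ (hurwitzZetaEulerMaclaurin b) ({s : ℂ | 0 < s.re} \ {1}) :=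
    DifferentiableOn.analyticOnNhd
      (fun z hz =>
        (differentiableAt_hurwitzZetaEulerMaclaurin hb.1 hz.1 hz.2).differentiableWithinAt) hopen
  have heq : hurwitzZeta b =ᶠ[𝓝 2] hurwitzZetaEulerMaclaurin b := by
    filter_upwards [(isOpen_lt continuous_const continuous_re).mem_nhds
      (by norm_num : (1 : ℝ) < (2 : ℂ).re)] with z hz
    exact hurwitzZeta_eq_hurwitzZetaEulerMaclaurin_of_one_lt_re hb hz
  exact hζ.eqOn_of_preconnected_of_eventuallyEq hEM isPreconnected_re_pos_diff_one
    ⟨by norm_num, by norm_num⟩ heq ⟨hs, hs1⟩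

lemma hasDerivAt_hurwitzZetaEulerMaclaurin {s : ℂ} (hs : 0 < s.re) (hs1 : s ≠ 1) {x : ℝ}
    (hx : 0 < x) :
    HasDerivAt (fun b : ℝ => hurwitzZetaEulerMaclaurin b s)
      (-s * ∑' n : ℕ, (((n : ℝ) + x : ℝ) : ℂ) ^ (-s - 1)) x := by
  have hs1' : s - 1 ≠ 0 := sub_ne_zero.mpr hs1
  have hpole : HasDerivAt (fun b : ℝ => (b : ℂ) ^ (1 - s) / (s - 1)) (-(x : ℂ) ^ (-s)) x := by
    refine ((hasDerivAt_ofReal_cpow_of_pos hx (1 - s)).div_const (s - 1)).congr_deriv ?_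
    rw [sub_sub_cancel_left]
    field_simp
    ring
  have hbound : ∀ (n : ℕ), ∀ y ∈ Ioi (x / 2),
      ‖eulerMaclaurinTermDeriv s (n + y)‖ ≤ 2 * ‖s‖ * ((n : ℝ) + x / 2) ^ (-(s.re + 1)) := by
    intro n y (hy : x / 2 < y)
    have hx2 : 0 < (n : ℝ) + x / 2 := by positivity
    refine (norm_eulerMaclaurinTermDeriv_le (by linarith) (by linarith)).trans ?_
    rw [neg_add']
    exact mul_le_mul_of_nonneg_left (rpow_le_rpow_of_nonpos hx2 (by linarith) (by linarith))
      (by positivity)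
  have hderiv : ∀ (n : ℕ), ∀ y ∈ Ioi (x / 2), HasDerivAt
      (fun b : ℝ => eulerMaclaurinTerm s (n + b)) (eulerMaclaurinTermDeriv s (n + y)) y := by
    intro n y (hy : x / 2 < y)
    have hy0 : 0 < (n : ℝ) + y := by linarith [n.cast_nonneg (α := ℝ)]
    exact (hasDerivAt_eulerMaclaurinTerm hs1 hy0).comp_const_add (n : ℝ) y
  have htsum := hasDerivAt_tsum_of_isPreconnected
    ((summable_rpow_natCast_add (half_pos hx) (r := s.re + 1) (by linarith)).mul_left (2 * ‖s‖))
    isOpen_Ioi isPreconnected_Ioi hderiv hbound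
    (half_lt_self hx) (summable_eulerMaclaurinTerm hx hs hs1) (half_lt_self hx)
  refine (hpole.add htsum).congr_deriv ?_
  rw [(hasSum_eulerMaclaurinTermDeriv hx hs).tsum_eq]
  ring

lemma hasDerivAt_hurwitzZeta_coe {s : ℂ} (hs : 0 < s.re) (hs1 : s ≠ 1) {x : ℝ}
    (hx : x ∈ Ioo 0 1) :
    HasDerivAt (fun b : ℝ => hurwitzZeta (b : UnitAddCircle) s) (-s * hurwitzZeta x (s + 1)) x := by
  have hζ : hurwitzZeta x (s + 1) = ∑' n : ℕ, (((n : ℝ) + x : ℝ) : ℂ) ^ (-s - 1) := by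
    refine ((hasSum_hurwitzZeta_of_one_lt_re (Ioo_subset_Icc_self hx)
      (by simp; linarith)).congr_fun fun n => ?_).tsum_eq.symm
    rw [neg_sub_left, cpow_neg, one_div, add_comm 1 s]
    push_cast
    rfl
  rw [hζ]
  refine (hasDerivAt_hurwitzZetaEulerMaclaurin hs hs1 hx.1).congr_of_eventuallyEq ?_
  filter_upwards [Ioo_mem_nhds hx.1 hx.2] with b hb
  exact hurwitzZeta_eq_hurwitzZetaEulerMaclaurin (Ioo_subset_Ioc_self hb) hs hs1

lemma UnitAddCircle.coe_one_sub (b : ℝ) : ((1 - b : ℝ) : UnitAddCircle) = -(b : UnitAddCircle) := by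
  rw [sub_eq_neg_add, AddCircle.coe_add_period, AddCircle.coe_neg]

lemma hasDerivAt_hurwitzZetaEven_coe {s : ℂ} (hs : 0 < s.re) (hs1 : s ≠ 1) {x : ℝ}
    (hx : x ∈ Ioo 0 1) :
    HasDerivAt (fun b : ℝ => hurwitzZetaEven (b : UnitAddCircle) s)
      (-s * (hurwitzZeta x (s + 1) - hurwitzZeta (1 - x : ℝ) (s + 1)) / 2) x := by
  have h₁ := hasDerivAt_hurwitzZeta_coe hs hs1 hx
  have h₂ := (hasDerivAt_hurwitzZeta_coe hs hs1 (x := 1 - x)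
    ⟨by linarith [hx.2], by linarith [hx.1]⟩).scomp x ((hasDerivAt_id x).const_sub 1)
  simp only [Function.comp_def, UnitAddCircle.coe_one_sub] at h₂
  simp only [hurwitzZetaEven_eq, UnitAddCircle.coe_one_sub]
  refine ((h₁.add h₂).div_const 2).congr_deriv ?_
  rw [neg_one_smul]
  ring

lemma hurwitzZeta_ofReal_eq_tsum {a : ℝ} (ha : a ∈ Ioc 0 1) {s : ℝ} (hs : 1 < s) :
    hurwitzZeta a s = ((∑' n : ℕ, ((n : ℝ) + a) ^ (-s) : ℝ) : ℂ) := by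
  rw [ofReal_tsum, ← (hasSum_hurwitzZeta_of_one_lt_re (Ioc_subset_Icc_self ha)
    (by simpa using hs)).tsum_eq]
  refine tsum_congr fun n => ?_
  rw [ofReal_cpow (by linarith [ha.1, n.cast_nonneg (α := ℝ)]), one_div, ← cpow_neg]
  push_cast
  rfl

lemma exists_neg_hasDerivAt_hurwitzZetaEven {τ : ℝ} (hτ : 0 < τ) (hτ1 : τ ≠ 1) {x : ℝ}
    (hx : x ∈ Ioo 0 (1 / 2)) :
    ∃ d : ℝ, d < 0 ∧ HasDerivAt (fun b : ℝ => hurwitzZetaEven (b : UnitAddCircle) τ) d x := by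
  let Z (a : ℝ) : ℝ := ∑' n : ℕ, ((n : ℝ) + a) ^ (-(τ + 1))
  have hZ : Z (1 - x) < Z x :=
    tsum_rpow_natCast_add_lt hx.1 (by linarith [hx.2]) (by linarith)
  refine ⟨-τ * (Z x - Z (1 - x)) / 2, by nlinarith, ?_⟩
  have h := hasDerivAt_hurwitzZetaEven_coe (s := τ) (by simpa using hτ) (by exact_mod_cast hτ1)
    (x := x) ⟨hx.1, by linarith [hx.2]⟩
  rw [show (τ : ℂ) + 1 = ((τ + 1 : ℝ) : ℂ) by push_cast; ring,
    hurwitzZeta_ofReal_eq_tsum ⟨hx.1, by linarith [hx.2]⟩ (by linarith),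
    hurwitzZeta_ofReal_eq_tsum ⟨by linarith [hx.2], by linarith [hx.1]⟩ (by linarith)] at h
  convert h using 1
  simp only [Z]
  push_cast
  ring

lemma exists_pos_cosZeta_eq_mul_hurwitzZetaEven {σ : ℝ} (hσ : σ ∈ Ioo 0 1) :
    ∃ k : ℝ, 0 < k ∧
      ∀ a : UnitAddCircle, cosZeta a σ = k * hurwitzZetaEven a ((1 - σ : ℝ) : ℂ) := by
  refine ⟨2 * (2 * π) ^ (σ - 1) * Real.Gamma (1 - σ) * Real.cos (π * (1 - σ) / 2), ?_, fun a => ?_⟩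
  · have hcos : 0 < Real.cos (π * (1 - σ) / 2) :=
      cos_pos_of_mem_Ioo ⟨by nlinarith [pi_pos, hσ.2], by nlinarith [pi_pos, hσ.1]⟩
    have := Real.Gamma_pos_of_pos (sub_pos.mpr hσ.2)
    positivity
  have hn : ∀ n : ℕ, ((1 - σ : ℝ) : ℂ) ≠ 1 - n := by
    intro n h
    push_cast at h
    have hσn : σ = n := by exact_mod_cast (by linear_combination -h : (σ : ℂ) = n)
    rcases n with _ | n
    · simp [hσn] at hσ
    · push_cast at hσn
      linarith [hσ.2, n.cast_nonneg (α := ℝ)]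
  have := cosZeta_one_sub a hn
  rw [show 1 - ((1 - σ : ℝ) : ℂ) = σ by push_cast; ring] at this
  rw [this, ofReal_mul, ofReal_mul, ofReal_mul, ofReal_cpow (by positivity), Gamma_ofReal,
    ofReal_cos]
  push_cast
  ring_nf

lemma Q_eq_hurwitzZetaEven_add_cosZeta (a : ℝ) (s : ℂ) :
    Q a s = hurwitzZetaEven a s + cosZeta a s := by
  rw [Q, hurwitzZetaEven_eq, cosZeta_eq, UnitAddCircle.coe_one_sub]
  ring

end

/-- For `σ ∈ (0,1)` and `a ∈ (0,1/2)`, the partial derivative of `Q(σ,a)` with respect to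
`a` is strictly negative (it is a negative real number). -/
theorem quadrilateral_zeta_deriv_a_neg (σ : ℝ) (hσ : σ ∈ Set.Ioo (0 : ℝ) 1)
    (a : ℝ) (ha : a ∈ Set.Ioo (0 : ℝ) (1 / 2)) :
    ∃ q : ℝ, q < 0 ∧ HasDerivAt (fun b : ℝ => Q b (σ : ℂ)) (q : ℂ) a := by
  obtain ⟨k, hk, hcos⟩ := exists_pos_cosZeta_eq_mul_hurwitzZetaEven hσ
  obtain ⟨d₁, hd₁, h₁⟩ := exists_neg_hasDerivAt_hurwitzZetaEven hσ.1 hσ.2.ne ha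
  obtain ⟨d₂, hd₂, h₂⟩ :=
    exists_neg_hasDerivAt_hurwitzZetaEven (sub_pos.mpr hσ.2) (by linarith [hσ.1]) ha
  refine ⟨d₁ + k * d₂, by nlinarith, ?_⟩
  simp only [Q_eq_hurwitzZetaEven_add_cosZeta, hcos]
  rw [ofReal_add, ofReal_mul]
  exact h₁.add (h₂.const_mul (k : ℂ))
end
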